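/- There is an absolute constant c > 0 with the following property: for every a ∈ D with 1/2 ≤ |a| < 1, the function f_a(z) := 1/(1−\bar{a}z) satisfies ∫_D |f_a'(z)|³·(1−|z|) dA(z) ≥ c·(1−|a|)^{-1}·‖f_a‖_3³, where A is area measure on D. Consequently, there is no constant C > 0 such that ∫_D |f'(z)|³(1−|z|) dA(z) ≤ C‖f‖_3³ holds for all f ∈ H³. -/

import Mathlib

open MeasureTheory Complex Set Metric ENNReal

noncomputable section

/-- Normalized Lebesgue (arclength) measure `m` on the unit circle `T`, as a measure on `ℂ`. -/
def circleMeasure : Measure ℂ :=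
  (ENNReal.ofReal (2 * Real.pi))⁻¹ •
    Measure.map (fun t : ℝ => Complex.exp (t * Complex.I)) (volume.restrict (Ioc 0 (2 * Real.pi)))

/-- The open unit disk `D`. -/
def unitDisk : Set ℂ := ball (0 : ℂ) 1

/-- `g` is, `m`-a.e. on the circle, the (radial) boundary-value function of `f`. -/
def IsBoundaryValue (f g : ℂ → ℂ) : Prop :=
  ∀ᵐ ζ ∂circleMeasure,
    Filter.Tendsto (fun r : ℝ => f (((r : ℂ)) * ζ)) (nhdsWithin 1 (Iio 1)) (nhds (g ζ))

/-- The Hardy norm `‖f‖_p`; for `p = ∞` it is the sup norm over the disk. -/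
def hNorm (p : ℝ≥0∞) (f : ℂ → ℂ) : ℝ≥0∞ :=
  if p = ⊤ then ⨆ z : unitDisk, (‖f (z : ℂ)‖₊ : ℝ≥0∞)
  else ⨆ r : Ioo (0 : ℝ) 1,
    (∫⁻ ζ, (‖f ((((r : ℝ) : ℂ)) * ζ)‖₊ : ℝ≥0∞) ^ p.toReal ∂circleMeasure) ^ (1 / p.toReal)

/-- Membership in the Hardy space `H^p` (with `f` identified with its boundary values,
i.e. the values of `f` on the circle are `m`-a.e. its radial limits from the disk). -/
def MemHp (p : ℝ≥0∞) (f : ℂ → ℂ) : Prop :=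
  DifferentiableOn ℂ f unitDisk ∧ hNorm p f < ⊤ ∧ IsBoundaryValue f f

/-- Inner functions: bounded holomorphic with unimodular boundary values. -/
def IsInner (θ : ℂ → ℂ) : Prop :=
  MemHp ⊤ θ ∧ ∀ᵐ ζ ∂circleMeasure, ‖θ ζ‖ = 1

/-- `θ` is nonconstant on the unit disk. -/
def Nonconstant (θ : ℂ → ℂ) : Prop := ¬ ∃ c : ℂ, ∀ z ∈ unitDisk, θ z = c

/-- Membership in the star-invariant subspace `K^p_θ`:  `f ∈ H^p` and the function
`ζ ↦ conj ζ * conj (f ζ) * θ ζ` on the circle coincides `m`-a.e. with (the boundary values of)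
an `H^p` function. -/
def MemKp (p : ℝ≥0∞) (θ f : ℂ → ℂ) : Prop :=
  MemHp p f ∧ ∃ h : ℂ → ℂ, MemHp p h ∧
    ∀ᵐ ζ ∂circleMeasure, h ζ = (starRingEnd ℂ) ζ * (starRingEnd ℂ) (f ζ) * θ ζ

/-- `u ∈ Re H^p`. -/
def MemReHp (p : ℝ≥0∞) (u : ℂ → ℝ) : Prop :=
  ∃ f : ℂ → ℂ, MemHp p f ∧ ∀ᵐ ζ ∂circleMeasure, u ζ = (f ζ).re

/-- `u ∈ Re K^p_θ`. -/
def MemReKp (p : ℝ≥0∞) (θ : ℂ → ℂ) (u : ℂ → ℝ) : Prop :=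
  ∃ f : ℂ → ℂ, MemKp p θ f ∧ ∀ᵐ ζ ∂circleMeasure, u ζ = (f ζ).re

open scoped ComplexConjugate

/-!
Write `δ = 1 - |a|` and `f_a(z) = (1 - ā z)⁻¹`. On the circle `|f_a| ≤ δ⁻¹`, so
`‖f_a‖₃³ ≤ δ⁻¹ ‖f_a‖₂² = δ⁻¹ (1 - |a|²)⁻¹ ≤ δ⁻²`, where the `H²` norm is read off from the
Poisson integral formula. On the other hand `|f_a'(z)| = |a| / |1 - ā z|² ≳ δ⁻²` on the disc of
radius `δ/2` about `a`, where also `1 - |z| ≥ δ/2`; this disc has area `≍ δ²`, so the weighted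
area integral of `|f_a'|³` is `≳ δ⁻³ ≳ δ⁻¹ ‖f_a‖₃³`. Letting `|a| → 1` rules out any constant.
-/

lemma ae_norm_eq_one_circleMeasure : ∀ᵐ ζ ∂circleMeasure, ‖ζ‖ = 1 := by
  have hmeas : MeasurableSet {ζ : ℂ | ‖ζ‖ = 1} := measurableSet_eq_fun (by fun_prop) (by fun_prop)
  refine Measure.ae_smul_measure ((ae_map_iff (by fun_prop) hmeas).2 ?_) _
  exact .of_forall fun t => Complex.norm_exp_ofReal_mul_I t

lemma lintegral_ofReal_circleMeasure {g : ℂ → ℝ} (hg : Measurable g)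
    (hg_cont : ContinuousOn g (sphere 0 1)) (hg₀ : ∀ ζ ∈ sphere (0 : ℂ) 1, 0 ≤ g ζ) :
    ∫⁻ ζ, ENNReal.ofReal (g ζ) ∂circleMeasure = ENNReal.ofReal (Real.circleAverage g 0 1) := by
  have hcirc : circleMap 0 1 = fun t : ℝ => Complex.exp (t * I) := by ext t; simp [circleMap]
  have hcont : Continuous fun t : ℝ => g (Complex.exp (t * I)) := by
    simpa only [hcirc, Function.comp_def] using hg_cont.comp_continuous (continuous_circleMap 0 1)
      (fun t => by simp)
  have hint : IntegrableOn (fun t : ℝ => g (Complex.exp (t * I))) (Ioc 0 (2 * Real.pi)) :=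
    hcont.integrableOn_Icc.mono_set Ioc_subset_Icc_self
  rw [circleMeasure, lintegral_smul_measure, lintegral_map (by fun_prop) (by fun_prop),
    ← ofReal_integral_eq_lintegral_ofReal hint
      (.of_forall fun t => hg₀ _ (by simp [Complex.norm_exp_ofReal_mul_I])),
    Real.circleAverage_def, smul_eq_mul, smul_eq_mul, ← ENNReal.ofReal_inv_of_pos (by positivity),
    ← ENNReal.ofReal_mul (by positivity), intervalIntegral.integral_of_le (by positivity), hcirc]

lemma one_sub_norm_le_norm_one_sub_mul (v : ℂ) {z : ℂ} (hz : ‖z‖ ≤ 1) :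
    1 - ‖v‖ ≤ ‖1 - v * z‖ := by
  have hvz : ‖v * z‖ ≤ ‖v‖ := by
    rw [norm_mul]; exact mul_le_of_le_one_right (norm_nonneg v) hz
  have := norm_sub_norm_le (1 : ℂ) (v * z)
  rw [norm_one] at this
  linarith

lemma one_sub_mul_ne_zero {v z : ℂ} (hv : ‖v‖ < 1) (hz : ‖z‖ ≤ 1) : 1 - v * z ≠ 0 :=
  norm_pos_iff.1 <| (sub_pos.2 hv).trans_le (one_sub_norm_le_norm_one_sub_mul v hz)

lemma norm_one_sub_mul_eq_norm_sub_conj (v : ℂ) {ζ : ℂ} (hζ : ‖ζ‖ = 1) :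
    ‖1 - v * ζ‖ = ‖ζ - conj v‖ := by
  have hζζ : conj ζ * ζ = 1 := by
    rw [← Complex.normSq_eq_conj_mul_self, Complex.normSq_eq_norm_sq, hζ]; norm_num
  calc ‖1 - v * ζ‖ = ‖conj (1 - v * ζ)‖ := (Complex.norm_conj _).symm
    _ = ‖conj ζ * (ζ - conj v)‖ := by
        rw [map_sub, map_one, map_mul]
        congr 1
        linear_combination -hζζ
    _ = ‖ζ - conj v‖ := by rw [norm_mul, Complex.norm_conj, hζ, one_mul]

lemma circleAverage_inv_norm_one_sub_mul_sq {v : ℂ} (hv : ‖v‖ < 1) :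
    Real.circleAverage (fun ζ => (‖1 - v * ζ‖ ^ 2)⁻¹) 0 1 = (1 - ‖v‖ ^ 2)⁻¹ := by
  have hw : conj v ∈ ball (0 : ℂ) 1 := by simpa using hv
  have hpoisson : Real.circleAverage (poissonKernel 0 (conj v)) 0 1 = 1 := by
    have h := (diffContOnCl_const (c := (1 : ℂ))).circleAverage_poissonKernel_smul hw
    simp only [Real.circleAverage_def, Pi.smul_apply', real_smul, mul_one,
      intervalIntegral.integral_ofReal] at h
    exact_mod_cast h
  -- on the unit circle the integrand is `(1 - ‖v‖²)⁻¹` times the Poisson kernel at `conj v`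
  have heq : EqOn (fun ζ => (‖1 - v * ζ‖ ^ 2)⁻¹) ((1 - ‖v‖ ^ 2)⁻¹ • poissonKernel 0 (conj v))
      (sphere 0 |1|) := by
    intro ζ hζ
    rw [abs_one, mem_sphere_zero_iff_norm] at hζ
    have hne : ‖ζ - conj v‖ ≠ 0 := by
      rw [← norm_one_sub_mul_eq_norm_sub_conj v hζ]
      exact norm_ne_zero_iff.2 (one_sub_mul_ne_zero hv hζ.le)
    have hv1 : 1 - ‖v‖ ^ 2 ≠ 0 := by nlinarith [norm_nonneg v]
    simp only [Pi.smul_apply, smul_eq_mul, poissonKernel, sub_zero, hζ, Complex.norm_conj,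
      norm_one_sub_mul_eq_norm_sub_conj v hζ]
    field_simp
  rw [Real.circleAverage_congr_sphere heq, Real.circleAverage_smul, hpoisson, smul_eq_mul, mul_one]

lemma lintegral_enorm_inv_one_sub_mul_rpow_three_le {v : ℂ} (hv : ‖v‖ < 1) :
    ∫⁻ ζ, ‖(1 - v * ζ)⁻¹‖ₑ ^ (3 : ℝ) ∂circleMeasure ≤ ENNReal.ofReal ((1 - ‖v‖)⁻¹ ^ 2) := by
  set δ := 1 - ‖v‖
  have hδ : 0 < δ := sub_pos.2 hv
  have hbound : ∀ᵐ ζ ∂circleMeasure, ‖(1 - v * ζ)⁻¹‖ₑ ^ (3 : ℝ) ≤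
      ENNReal.ofReal δ⁻¹ * ENNReal.ofReal ((‖1 - v * ζ‖ ^ 2)⁻¹) := by
    filter_upwards [ae_norm_eq_one_circleMeasure] with ζ hζ
    have hn : δ ≤ ‖1 - v * ζ‖ := one_sub_norm_le_norm_one_sub_mul v hζ.le
    rw [← ENNReal.ofReal_mul (by positivity), ← ofReal_norm, ENNReal.rpow_ofNat,
      ← ENNReal.ofReal_pow (norm_nonneg _), norm_inv]
    refine ENNReal.ofReal_le_ofReal ?_
    rw [pow_succ', ← inv_pow]
    gcongr
  have hmeas : Measurable fun ζ : ℂ => (‖1 - v * ζ‖ ^ 2)⁻¹ := by fun_prop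
  have hcont : ContinuousOn (fun ζ : ℂ => (‖1 - v * ζ‖ ^ 2)⁻¹) (sphere 0 1) := by
    refine ContinuousOn.inv₀ (by fun_prop) fun ζ hζ => ?_
    rw [mem_sphere_zero_iff_norm] at hζ
    exact pow_ne_zero _ (norm_ne_zero_iff.2 (one_sub_mul_ne_zero hv hζ.le))
  calc ∫⁻ ζ, ‖(1 - v * ζ)⁻¹‖ₑ ^ (3 : ℝ) ∂circleMeasure
      ≤ ∫⁻ ζ, ENNReal.ofReal δ⁻¹ * ENNReal.ofReal ((‖1 - v * ζ‖ ^ 2)⁻¹) ∂circleMeasure :=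
        lintegral_mono_ae hbound
    _ = ENNReal.ofReal δ⁻¹ * ENNReal.ofReal ((1 - ‖v‖ ^ 2)⁻¹) := by
        rw [lintegral_const_mul _ hmeas.ennreal_ofReal,
          lintegral_ofReal_circleMeasure hmeas hcont fun _ _ => by positivity,
          circleAverage_inv_norm_one_sub_mul_sq hv]
    _ ≤ ENNReal.ofReal (δ⁻¹ ^ 2) := by
        rw [sq δ⁻¹, ENNReal.ofReal_mul (by positivity)]
        gcongr
        nlinarith [norm_nonneg v]

lemma hNorm_rpow_le_of_lintegral_le {p : ℝ≥0∞} (hp : p ≠ ⊤) (hp₀ : 0 < p.toReal) {f : ℂ → ℂ}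
    {M : ℝ≥0∞} (h : ∀ r ∈ Ioo (0 : ℝ) 1, ∫⁻ ζ, ‖f (r * ζ)‖ₑ ^ p.toReal ∂circleMeasure ≤ M) :
    hNorm p f ^ p.toReal ≤ M := by
  rw [hNorm, if_neg hp]
  calc (⨆ r : Ioo (0 : ℝ) 1, (∫⁻ ζ, ‖f (r * ζ)‖ₑ ^ p.toReal ∂circleMeasure) ^ (1 / p.toReal))
        ^ p.toReal
      ≤ (M ^ (1 / p.toReal)) ^ p.toReal := by
        gcongr
        exact iSup_le fun r => by gcongr; exact h r r.2
    _ = M := by rw [← ENNReal.rpow_mul, one_div_mul_cancel hp₀.ne', ENNReal.rpow_one]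

lemma hNorm_three_inv_one_sub_mul_pow_le {v : ℂ} (hv : ‖v‖ < 1) :
    hNorm (ENNReal.ofReal 3) (fun z => (1 - v * z)⁻¹) ^ 3 ≤ ENNReal.ofReal ((1 - ‖v‖)⁻¹ ^ 2) := by
  have h3 : (ENNReal.ofReal 3).toReal = 3 := ENNReal.toReal_ofReal (by norm_num)
  have key := hNorm_rpow_le_of_lintegral_le (f := fun z => (1 - v * z)⁻¹) ENNReal.ofReal_ne_top
    (by rw [h3]; norm_num) (M := ENNReal.ofReal ((1 - ‖v‖)⁻¹ ^ 2)) fun r hr => ?_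
  · rwa [h3, ENNReal.rpow_ofNat] at key
  have hvr : ‖v * r‖ ≤ ‖v‖ := by
    rw [norm_mul, Complex.norm_real, Real.norm_of_nonneg hr.1.le]
    exact mul_le_of_le_one_right (norm_nonneg v) hr.2.le
  calc ∫⁻ ζ, ‖(1 - v * (r * ζ))⁻¹‖ₑ ^ (ENNReal.ofReal 3).toReal ∂circleMeasure
      = ∫⁻ ζ, ‖(1 - v * r * ζ)⁻¹‖ₑ ^ (3 : ℝ) ∂circleMeasure := by simp only [h3, mul_assoc]
    _ ≤ ENNReal.ofReal ((1 - ‖v * r‖)⁻¹ ^ 2) :=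
        lintegral_enorm_inv_one_sub_mul_rpow_three_le (hvr.trans_lt hv)
    _ ≤ ENNReal.ofReal ((1 - ‖v‖)⁻¹ ^ 2) := by
        have hvr' : 0 < 1 - ‖v * r‖ := by linarith
        exact ENNReal.ofReal_le_ofReal
          (pow_le_pow_left₀ (inv_nonneg.2 hvr'.le) (inv_anti₀ (by linarith) (by linarith)) 2)

lemma isBoundaryValue_self_of_continuousAt {f : ℂ → ℂ}
    (hf : ∀ ζ : ℂ, ‖ζ‖ = 1 → ContinuousAt f ζ) : IsBoundaryValue f f := by
  filter_upwards [ae_norm_eq_one_circleMeasure] with ζ hζ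
  have hline : ContinuousAt (fun r : ℝ => (r : ℂ) * ζ) 1 := by fun_prop
  have hcomp := (hf ζ hζ).comp_of_eq hline (by simp)
  simpa only [Function.comp_def, Complex.ofReal_one, one_mul] using
    hcomp.tendsto.mono_left nhdsWithin_le_nhds

lemma memHp_three_inv_one_sub_mul {v : ℂ} (hv : ‖v‖ < 1) :
    MemHp (ENNReal.ofReal 3) (fun z => (1 - v * z)⁻¹) := by
  have hdiff : ∀ z : ℂ, ‖z‖ ≤ 1 → DifferentiableAt ℂ (fun z => (1 - v * z)⁻¹) z :=
    fun z hz => (by fun_prop : DifferentiableAt ℂ (fun z => 1 - v * z) z).inv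
      (one_sub_mul_ne_zero hv hz)
  refine ⟨fun z hz => (hdiff z (mem_ball_zero_iff.1 hz).le).differentiableWithinAt, ?_,
    isBoundaryValue_self_of_continuousAt fun ζ hζ => (hdiff ζ hζ.le).continuousAt⟩
  simpa using (hNorm_three_inv_one_sub_mul_pow_le hv).trans_lt ENNReal.ofReal_lt_top

def littlewoodPaleyIntegral (f : ℂ → ℂ) : ℝ≥0∞ :=
  ∫⁻ z in unitDisk, ‖deriv f z‖ₑ ^ 3 * ENNReal.ofReal (1 - ‖z‖)

lemma deriv_inv_one_sub_mul {v z : ℂ} (h : 1 - v * z ≠ 0) :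
    deriv (fun w => (1 - v * w)⁻¹) z = v / (1 - v * z) ^ 2 := by
  have hlin : HasDerivAt (fun w => 1 - v * w) (-v) z := by
    simpa using ((hasDerivAt_id z).const_mul v).const_sub 1
  exact (hlin.inv h).deriv.trans (by ring)

lemma norm_one_sub_mul_le_of_mem_ball {v z : ℂ} (hv : ‖v‖ ≤ 1)
    (hz : z ∈ ball (conj v) ((1 - ‖v‖) / 2)) : ‖1 - v * z‖ ≤ 5 / 2 * (1 - ‖v‖) := by
  rw [mem_ball, dist_comm, dist_eq_norm] at hz
  have hcenter : ‖1 - v * conj v‖ ≤ 2 * (1 - ‖v‖) := by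
    have hreal : 1 - v * conj v = ((1 - ‖v‖ ^ 2 : ℝ) : ℂ) := by
      rw [Complex.mul_conj, Complex.normSq_eq_norm_sq]; push_cast; ring
    rw [hreal, Complex.norm_real, Real.norm_of_nonneg (by nlinarith [norm_nonneg v])]
    nlinarith [norm_nonneg v]
  have hshift : ‖v * (conj v - z)‖ ≤ (1 - ‖v‖) / 2 := by
    rw [norm_mul]
    nlinarith [norm_nonneg v, norm_nonneg (conj v - z)]
  calc ‖1 - v * z‖ = ‖(1 - v * conj v) + v * (conj v - z)‖ := by ring_nf
    _ ≤ ‖1 - v * conj v‖ + ‖v * (conj v - z)‖ := norm_add_le _ _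
    _ ≤ 5 / 2 * (1 - ‖v‖) := by linarith

lemma le_littlewoodPaleyIntegral_inv_one_sub_mul {v : ℂ} (hv₀ : 1 / 2 ≤ ‖v‖) (hv : ‖v‖ < 1) :
    ENNReal.ofReal (Real.pi / 15625 * (1 - ‖v‖)⁻¹ ^ 3) ≤
      littlewoodPaleyIntegral (fun z => (1 - v * z)⁻¹) := by
  set δ := 1 - ‖v‖
  have hδ : 0 < δ := sub_pos.2 hv
  -- `π / 15625 = (2/25)³ · (1/2) · (π/4)`: on `B`, `|f'| ≥ (2/25) δ⁻²` and `1 - |z| ≥ δ/2`,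
  -- and `B` has area `π δ²/4`
  set B := ball (conj v) (δ / 2)
  have hnorm_le : ∀ z ∈ B, ‖z‖ ≤ 1 - δ / 2 := fun z hz => by
    have := norm_le_norm_add_norm_sub' z (conj v)
    rw [mem_ball, dist_eq_norm] at hz
    rw [Complex.norm_conj] at this
    linarith
  have hBsub : B ⊆ unitDisk := fun z hz => by
    rw [unitDisk, mem_ball_zero_iff]; linarith [hnorm_le z hz]
  have hpointwise : ∀ z ∈ B, ENNReal.ofReal ((2 / 25 * δ⁻¹ ^ 2) ^ 3 * (δ / 2)) ≤
      ‖deriv (fun w => (1 - v * w)⁻¹) z‖ₑ ^ 3 * ENNReal.ofReal (1 - ‖z‖) := fun z hz => by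
    have hz1 : ‖z‖ ≤ 1 := by linarith [hnorm_le z hz]
    have hne := one_sub_mul_ne_zero hv hz1
    have hu := norm_one_sub_mul_le_of_mem_ball hv.le hz
    have hderiv : 2 / 25 * δ⁻¹ ^ 2 ≤ ‖deriv (fun w => (1 - v * w)⁻¹) z‖ := by
      rw [deriv_inv_one_sub_mul hne, norm_div, norm_pow]
      calc 2 / 25 * δ⁻¹ ^ 2 = (1 / 2) / (5 / 2 * δ) ^ 2 := by field_simp; norm_num
        _ ≤ ‖v‖ / ‖1 - v * z‖ ^ 2 := by gcongr
    rw [ENNReal.ofReal_mul (by positivity), ← ofReal_norm, ← ENNReal.ofReal_pow (norm_nonneg _)]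
    gcongr
    linarith [hnorm_le z hz]
  calc ENNReal.ofReal (Real.pi / 15625 * δ⁻¹ ^ 3)
      = ENNReal.ofReal ((2 / 25 * δ⁻¹ ^ 2) ^ 3 * (δ / 2)) * volume B := by
        rw [Complex.volume_ball, ← ENNReal.ofReal_pow (by positivity), ← NNReal.coe_real_pi,
          ENNReal.ofReal_coe_nnreal.symm, ← ENNReal.ofReal_mul (by positivity),
          ← ENNReal.ofReal_mul (by positivity)]
        congr 1
        field_simp
        norm_num
    _ = ∫⁻ _ in B, ENNReal.ofReal ((2 / 25 * δ⁻¹ ^ 2) ^ 3 * (δ / 2)) := by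
        rw [setLIntegral_const, mul_comm]
    _ ≤ ∫⁻ z in B, ‖deriv (fun w => (1 - v * w)⁻¹) z‖ₑ ^ 3 * ENNReal.ofReal (1 - ‖z‖) :=
        setLIntegral_mono' measurableSet_ball hpointwise
    _ ≤ littlewoodPaleyIntegral (fun z => (1 - v * z)⁻¹) :=
        lintegral_mono' (Measure.restrict_mono hBsub le_rfl) le_rfl

lemma mul_hNorm_three_pow_le_littlewoodPaleyIntegral_inv_one_sub_mul {v : ℂ} (hv₀ : 1 / 2 ≤ ‖v‖)
    (hv : ‖v‖ < 1) :
    ENNReal.ofReal (Real.pi / 15625) * (ENNReal.ofReal (1 - ‖v‖))⁻¹ *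
        hNorm (ENNReal.ofReal 3) (fun z => (1 - v * z)⁻¹) ^ 3 ≤
      littlewoodPaleyIntegral (fun z => (1 - v * z)⁻¹) := by
  have hδ : 0 < 1 - ‖v‖ := sub_pos.2 hv
  calc ENNReal.ofReal (Real.pi / 15625) * (ENNReal.ofReal (1 - ‖v‖))⁻¹ *
        hNorm (ENNReal.ofReal 3) (fun z => (1 - v * z)⁻¹) ^ 3
      ≤ ENNReal.ofReal (Real.pi / 15625) * ENNReal.ofReal (1 - ‖v‖)⁻¹ *
        ENNReal.ofReal ((1 - ‖v‖)⁻¹ ^ 2) := by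
        rw [ENNReal.ofReal_inv_of_pos hδ]
        gcongr
        exact hNorm_three_inv_one_sub_mul_pow_le hv
    _ = ENNReal.ofReal (Real.pi / 15625 * (1 - ‖v‖)⁻¹ ^ 3) := by
        rw [← ENNReal.ofReal_mul (by positivity), ← ENNReal.ofReal_mul (by positivity)]
        ring_nf
    _ ≤ _ := le_littlewoodPaleyIntegral_inv_one_sub_mul hv₀ hv

lemma not_exists_littlewoodPaleyIntegral_le_hNorm_three :
    ¬ ∃ C : ℝ, 0 < C ∧ ∀ f : ℂ → ℂ, MemHp (ENNReal.ofReal 3) f →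
      littlewoodPaleyIntegral f ≤ ENNReal.ofReal C * hNorm (ENNReal.ofReal 3) f ^ 3 := by
  rintro ⟨C, hC, hbound⟩
  obtain ⟨ε, hε, hεC⟩ := exists_pos_mul_lt (by positivity : 0 < Real.pi / 15625) C
  set δ := min ε (1 / 2)
  have hδ : 0 < δ := lt_min hε (by norm_num)
  have hδ_half : δ ≤ 1 / 2 := min_le_right _ _
  set v : ℂ := ((1 - δ : ℝ) : ℂ)
  have hv : ‖v‖ = 1 - δ := by rw [Complex.norm_real, Real.norm_of_nonneg (by linarith)]
  have h : ENNReal.ofReal (Real.pi / 15625 * δ⁻¹ ^ 3) ≤ ENNReal.ofReal (C * δ⁻¹ ^ 2) := calc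
    _ = ENNReal.ofReal (Real.pi / 15625 * (1 - ‖v‖)⁻¹ ^ 3) := by rw [hv, _root_.sub_sub_cancel]
    _ ≤ littlewoodPaleyIntegral (fun z => (1 - v * z)⁻¹) :=
        le_littlewoodPaleyIntegral_inv_one_sub_mul (by linarith) (by linarith)
    _ ≤ ENNReal.ofReal C * hNorm (ENNReal.ofReal 3) (fun z => (1 - v * z)⁻¹) ^ 3 :=
        hbound _ (memHp_three_inv_one_sub_mul (by linarith))
    _ ≤ ENNReal.ofReal C * ENNReal.ofReal ((1 - ‖v‖)⁻¹ ^ 2) := by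
        gcongr
        exact hNorm_three_inv_one_sub_mul_pow_le (by linarith)
    _ = ENNReal.ofReal (C * δ⁻¹ ^ 2) := by rw [hv, _root_.sub_sub_cancel, ENNReal.ofReal_mul hC.le]
  rw [ENNReal.ofReal_le_ofReal_iff (by positivity)] at h
  have hCδ : Real.pi / 15625 ≤ C * δ := by
    have := mul_le_mul_of_nonneg_right h (by positivity : 0 ≤ δ ^ 3)
    field_simp at this
    linarith
  nlinarith [min_le_left ε (1 / 2)]

/-- The Littlewood--Paley quantity `∫_D |f'|³ (1−|z|) dA` blows up for the test functions
`f_a(z) = (1 − conj a·z)⁻¹` at rate `(1−|a|)⁻¹ ‖f_a‖₃³`; consequently no bound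
`∫_D |f'|³ (1−|z|) dA ≤ C ‖f‖₃³` can hold on all of `H³`. -/
theorem littlewood_paley_cube_fails :
    (∃ c : ℝ, 0 < c ∧ ∀ a : ℂ, 1 / 2 ≤ ‖a‖ → ‖a‖ < 1 →
      ENNReal.ofReal c * (ENNReal.ofReal (1 - ‖a‖))⁻¹ *
          hNorm (ENNReal.ofReal 3) (fun z => (1 - (starRingEnd ℂ) a * z)⁻¹) ^ 3 ≤
        ∫⁻ z in unitDisk,
          (‖deriv (fun w => (1 - (starRingEnd ℂ) a * w)⁻¹) z‖₊ : ℝ≥0∞) ^ 3 *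
            ENNReal.ofReal (1 - ‖z‖) ∂volume) ∧
    ¬ ∃ C : ℝ, 0 < C ∧ ∀ f : ℂ → ℂ, MemHp (ENNReal.ofReal 3) f →
      ∫⁻ z in unitDisk,
          (‖deriv f z‖₊ : ℝ≥0∞) ^ 3 * ENNReal.ofReal (1 - ‖z‖) ∂volume ≤
        ENNReal.ofReal C * hNorm (ENNReal.ofReal 3) f ^ 3 := by
  refine ⟨⟨Real.pi / 15625, by positivity, fun a ha₀ ha => ?_⟩,
    not_exists_littlewoodPaleyIntegral_le_hNorm_three⟩
  have h := mul_hNorm_three_pow_le_littlewoodPaleyIntegral_inv_one_sub_mul (v := conj a)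
    (by rwa [Complex.norm_conj]) (by rwa [Complex.norm_conj])
  rwa [Complex.norm_conj] at h
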